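/- Fix Θ ∈ (0, π). Then for all r₁, r₂ > 0: ∂ϑ₁/∂r₁ < 0, ∂ϑ₂/∂r₁ > 0, and ∂(ϑ₁ + ϑ₂)/∂r₁ < 0. -/

import Mathlib

/-!
The cotangent rule gives `cot ϑ₁ = (sinh r₁ cosh r₂ + cos Θ cosh r₁ sinh r₂) / (sin Θ sinh r₂)`,
whose `r₁`-derivative is `cosh d / (sin Θ sinh r₂)`, and the law of sines
`sin ϑ₁ = sin Θ sinh r₂ / sinh d` turns this into
`∂ϑ₁/∂r₁ = -sin Θ sinh r₂ cosh d / sinh² d`. Since `ϑ₂` is `ϑ₁` with the radii swapped,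
differentiating `cot ϑ₁` in `r₂` instead gives `∂ϑ₂/∂r₁ = sin Θ sinh r₂ / sinh² d`.
All three signs then follow from `cosh d > 1`.
-/

/-- The inverse hyperbolic cosine: `arcosh x = log (x + √(x² − 1))` for `x ≥ 1`. -/
noncomputable def arcosh (x : ℝ) : ℝ := Real.log (x + Real.sqrt (x ^ 2 - 1))

/-- The hyperbolic distance between the centers of two hyperbolic disks of radii `r₁`, `r₂`
meeting at exterior intersection angle `Θ` (hyperbolic cosine law). -/
noncomputable def dist2 (Θ r₁ r₂ : ℝ) : ℝ :=
  arcosh (Real.cosh r₁ * Real.cosh r₂ + Real.cos Θ * Real.sinh r₁ * Real.sinh r₂)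

/-- The inner angle `ϑ₁` at the first center of the hyperbolic triangle with side
lengths `r₁`, `r₂`, `d` (hyperbolic law of cosines). -/
noncomputable def theta2₁ (Θ r₁ r₂ : ℝ) : ℝ :=
  Real.arccos ((Real.cosh r₁ * Real.cosh (dist2 Θ r₁ r₂) - Real.cosh r₂) /
    (Real.sinh r₁ * Real.sinh (dist2 Θ r₁ r₂)))

/-- The inner angle `ϑ₂` at the second center of the hyperbolic triangle with side
lengths `r₁`, `r₂`, `d` (hyperbolic law of cosines). -/
noncomputable def theta2₂ (Θ r₁ r₂ : ℝ) : ℝ :=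
  Real.arccos ((Real.cosh r₂ * Real.cosh (dist2 Θ r₁ r₂) - Real.cosh r₁) /
    (Real.sinh r₂ * Real.sinh (dist2 Θ r₁ r₂)))

open Real Topology

lemma arccos_div_sqrt_sq_add_sq (x : ℝ) {y : ℝ} (hy : 0 < y) :
    arccos (x / √(x ^ 2 + y ^ 2)) = π / 2 - arctan (x / y) := by
  have h : x / √(x ^ 2 + y ^ 2) = x / y / √(1 + (x / y) ^ 2) := by
    rw [div_pow, one_add_div (by positivity), sqrt_div' _ (by positivity), sqrt_sq hy.le,
      add_comm (y ^ 2)]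
    field_simp
  rw [arccos_eq_pi_div_two_sub_arcsin, arctan_eq_arcsin, h]

lemma dist2_eq_arcosh (Θ r₁ r₂ : ℝ) :
    dist2 Θ r₁ r₂ = Real.arcosh (cosh r₁ * cosh r₂ + cos Θ * sinh r₁ * sinh r₂) := rfl

lemma dist2_comm (Θ r₁ r₂ : ℝ) : dist2 Θ r₁ r₂ = dist2 Θ r₂ r₁ := by
  simp only [dist2_eq_arcosh]
  ring_nf

lemma theta2₂_eq_theta2₁_swap (Θ r₁ r₂ : ℝ) : theta2₂ Θ r₁ r₂ = theta2₁ Θ r₂ r₁ := by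
  rw [theta2₂, theta2₁, dist2_comm]

section

variable {Θ r₁ r₂ : ℝ}

lemma neg_one_lt_cos_of_sin_pos (hΘ : 0 < sin Θ) : -1 < cos Θ := by
  nlinarith [sin_sq_add_cos_sq Θ]

lemma one_lt_cosh_mul_cosh_add_cos_mul_sinh_mul_sinh (hΘ : -1 < cos Θ) (hr₁ : 0 < r₁)
    (hr₂ : 0 < r₂) : 1 < cosh r₁ * cosh r₂ + cos Θ * sinh r₁ * sinh r₂ := by
  have h : 1 ≤ cosh r₁ * cosh r₂ - sinh r₁ * sinh r₂ := cosh_sub r₁ r₂ ▸ one_le_cosh _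
  nlinarith [mul_pos (neg_lt_iff_pos_add.1 hΘ) (mul_pos (sinh_pos_iff.2 hr₁) (sinh_pos_iff.2 hr₂))]

lemma cosh_dist2 (hΘ : -1 < cos Θ) (hr₁ : 0 < r₁) (hr₂ : 0 < r₂) :
    cosh (dist2 Θ r₁ r₂) = cosh r₁ * cosh r₂ + cos Θ * sinh r₁ * sinh r₂ :=
  cosh_arcosh (one_lt_cosh_mul_cosh_add_cos_mul_sinh_mul_sinh hΘ hr₁ hr₂).le

lemma dist2_pos (hΘ : -1 < cos Θ) (hr₁ : 0 < r₁) (hr₂ : 0 < r₂) : 0 < dist2 Θ r₁ r₂ :=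
  arcosh_pos (one_lt_cosh_mul_cosh_add_cos_mul_sinh_mul_sinh hΘ hr₁ hr₂)

lemma one_lt_cosh_dist2 (hΘ : -1 < cos Θ) (hr₁ : 0 < r₁) (hr₂ : 0 < r₂) :
    1 < cosh (dist2 Θ r₁ r₂) :=
  cosh_dist2 hΘ hr₁ hr₂ ▸ one_lt_cosh_mul_cosh_add_cos_mul_sinh_mul_sinh hΘ hr₁ hr₂

lemma sinh_dist2_sq (hΘ : -1 < cos Θ) (hr₁ : 0 < r₁) (hr₂ : 0 < r₂) :
    sinh (dist2 Θ r₁ r₂) ^ 2 =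
      (sinh r₁ * cosh r₂ + cos Θ * cosh r₁ * sinh r₂) ^ 2 + (sin Θ * sinh r₂) ^ 2 := by
  rw [sinh_sq, cosh_dist2 hΘ hr₁ hr₂]
  linear_combination (cosh r₂ ^ 2 - cos Θ ^ 2 * sinh r₂ ^ 2) * cosh_sq r₁ + cosh_sq r₂
    - sinh r₂ ^ 2 * sin_sq_add_cos_sq Θ

/-- `cot ϑ₁`, by the cotangent rule in the triangle whose angle between the sides `r₁`, `r₂` is
`π - Θ`. -/
noncomputable def cotTheta2₁ (Θ r₁ r₂ : ℝ) : ℝ :=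
  (sinh r₁ * cosh r₂ + cos Θ * cosh r₁ * sinh r₂) / (sin Θ * sinh r₂)

lemma theta2₁_eq_pi_div_two_sub_arctan (hΘ : 0 < sin Θ) (hr₁ : 0 < r₁) (hr₂ : 0 < r₂) :
    theta2₁ Θ r₁ r₂ = π / 2 - arctan (cotTheta2₁ Θ r₁ r₂) := by
  have hcos := neg_one_lt_cos_of_sin_pos hΘ
  have hsinh_dist : sinh (dist2 Θ r₁ r₂) =
      √((sinh r₁ * cosh r₂ + cos Θ * cosh r₁ * sinh r₂) ^ 2 + (sin Θ * sinh r₂) ^ 2) := by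
    rw [← sinh_dist2_sq hcos hr₁ hr₂, sqrt_sq (sinh_pos_iff.2 (dist2_pos hcos hr₁ hr₂)).le]
  have hnum : cosh r₁ * cosh (dist2 Θ r₁ r₂) - cosh r₂ =
      sinh r₁ * (sinh r₁ * cosh r₂ + cos Θ * cosh r₁ * sinh r₂) := by
    rw [cosh_dist2 hcos hr₁ hr₂]
    linear_combination cosh r₂ * cosh_sq r₁
  rw [theta2₁, cotTheta2₁, hnum, hsinh_dist, mul_div_mul_left _ _ (sinh_pos_iff.2 hr₁).ne',
    arccos_div_sqrt_sq_add_sq _ (mul_pos hΘ (sinh_pos_iff.2 hr₂))]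

lemma one_add_cotTheta2₁_sq (hΘ : 0 < sin Θ) (hr₁ : 0 < r₁) (hr₂ : 0 < r₂) :
    1 + cotTheta2₁ Θ r₁ r₂ ^ 2 = sinh (dist2 Θ r₁ r₂) ^ 2 / (sin Θ * sinh r₂) ^ 2 := by
  have hK : sin Θ * sinh r₂ ≠ 0 := (mul_pos hΘ (sinh_pos_iff.2 hr₂)).ne'
  rw [sinh_dist2_sq (neg_one_lt_cos_of_sin_pos hΘ) hr₁ hr₂, cotTheta2₁]
  field_simp
  ring

lemma hasDerivAt_cotTheta2₁_left (Θ r₁ r₂ : ℝ) :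
    HasDerivAt (fun t => cotTheta2₁ Θ t r₂)
      ((cosh r₁ * cosh r₂ + cos Θ * sinh r₁ * sinh r₂) / (sin Θ * sinh r₂)) r₁ :=
  (((hasDerivAt_sinh r₁).mul_const (cosh r₂)).add
    (((hasDerivAt_cosh r₁).const_mul (cos Θ)).mul_const (sinh r₂))).div_const (sin Θ * sinh r₂)

lemma hasDerivAt_cotTheta2₁_right (hΘ : sin Θ ≠ 0) (hr₂ : r₂ ≠ 0) :
    HasDerivAt (fun t => cotTheta2₁ Θ r₁ t) (-sinh r₁ / (sin Θ * sinh r₂ ^ 2)) r₂ := by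
  have hs : sinh r₂ ≠ 0 := sinh_ne_zero.2 hr₂
  have := (((hasDerivAt_cosh r₂).const_mul (sinh r₁)).add
    (((hasDerivAt_sinh r₂).const_mul (cos Θ * cosh r₁)))).div
    ((hasDerivAt_sinh r₂).const_mul (sin Θ)) (mul_ne_zero hΘ hs)
  refine this.congr_deriv ?_
  simp only [Pi.add_apply]
  field_simp
  linear_combination -sinh r₁ * cosh_sq r₂

lemma hasDerivAt_theta2₁_left (hΘ : 0 < sin Θ) (hr₁ : 0 < r₁) (hr₂ : 0 < r₂) :
    HasDerivAt (fun t => theta2₁ Θ t r₂)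
      (-(sin Θ * sinh r₂ * cosh (dist2 Θ r₁ r₂)) / sinh (dist2 Θ r₁ r₂) ^ 2) r₁ := by
  have hcos := neg_one_lt_cos_of_sin_pos hΘ
  have hK : sin Θ * sinh r₂ ≠ 0 := (mul_pos hΘ (sinh_pos_iff.2 hr₂)).ne'
  have hd : sinh (dist2 Θ r₁ r₂) ≠ 0 := (sinh_pos_iff.2 (dist2_pos hcos hr₁ hr₂)).ne'
  have heq : (fun t => theta2₁ Θ t r₂) =ᶠ[𝓝 r₁] fun t => π / 2 - arctan (cotTheta2₁ Θ t r₂) := by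
    filter_upwards [Ioi_mem_nhds hr₁] with t ht using theta2₁_eq_pi_div_two_sub_arctan hΘ ht hr₂
  refine (((hasDerivAt_cotTheta2₁_left Θ r₁ r₂).arctan.const_sub (π / 2)).congr_of_eventuallyEq
    heq).congr_deriv ?_
  rw [one_add_cotTheta2₁_sq hΘ hr₁ hr₂, cosh_dist2 hcos hr₁ hr₂]
  field_simp

lemma hasDerivAt_theta2₁_right (hΘ : 0 < sin Θ) (hr₁ : 0 < r₁) (hr₂ : 0 < r₂) :
    HasDerivAt (fun t => theta2₁ Θ r₁ t) (sin Θ * sinh r₁ / sinh (dist2 Θ r₁ r₂) ^ 2) r₂ := by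
  have hd : sinh (dist2 Θ r₁ r₂) ≠ 0 :=
    (sinh_pos_iff.2 (dist2_pos (neg_one_lt_cos_of_sin_pos hΘ) hr₁ hr₂)).ne'
  have heq : (fun t => theta2₁ Θ r₁ t) =ᶠ[𝓝 r₂] fun t => π / 2 - arctan (cotTheta2₁ Θ r₁ t) := by
    filter_upwards [Ioi_mem_nhds hr₂] with t ht using theta2₁_eq_pi_div_two_sub_arctan hΘ hr₁ ht
  refine (((hasDerivAt_cotTheta2₁_right hΘ.ne' hr₂.ne').arctan.const_sub (π / 2))
    |>.congr_of_eventuallyEq heq).congr_deriv ?_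
  rw [one_add_cotTheta2₁_sq hΘ hr₁ hr₂]
  have := (sinh_pos_iff.2 hr₂).ne'
  field_simp

end

theorem two_circle_angle_derivative_signs
    (Θ : ℝ) (hΘ : Θ ∈ Set.Ioo 0 Real.pi)
    (r₁ r₂ : ℝ) (hr₁ : 0 < r₁) (hr₂ : 0 < r₂) :
    deriv (fun t => theta2₁ Θ t r₂) r₁ < 0 ∧
    0 < deriv (fun t => theta2₂ Θ t r₂) r₁ ∧
    deriv (fun t => theta2₁ Θ t r₂ + theta2₂ Θ t r₂) r₁ < 0 := by
  have hsin : 0 < sin Θ := sin_pos_of_pos_of_lt_pi hΘ.1 hΘ.2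
  have hθ₁ := hasDerivAt_theta2₁_left hsin hr₁ hr₂
  have hθ₂ : HasDerivAt (fun t => theta2₂ Θ t r₂)
      (sin Θ * sinh r₂ / sinh (dist2 Θ r₁ r₂) ^ 2) r₁ := by
    have := hasDerivAt_theta2₁_right hsin hr₂ hr₁
    rw [dist2_comm] at this
    simpa only [theta2₂_eq_theta2₁_swap] using this
  have hK : 0 < sin Θ * sinh r₂ := mul_pos hsin (sinh_pos_iff.2 hr₂)
  have hcosh := one_lt_cosh_dist2 (neg_one_lt_cos_of_sin_pos hsin) hr₁ hr₂
  have hsinh : 0 < sinh (dist2 Θ r₁ r₂) ^ 2 := by nlinarith [sinh_sq (dist2 Θ r₁ r₂)]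
  refine ⟨hθ₁.deriv ▸ ?_, hθ₂.deriv ▸ ?_, (hθ₁.add hθ₂).deriv ▸ ?_⟩
  · exact div_neg_of_neg_of_pos (neg_neg_of_pos (mul_pos hK (by linarith))) hsinh
  · exact div_pos hK hsinh
  · rw [← add_div, show -(sin Θ * sinh r₂ * cosh (dist2 Θ r₁ r₂)) + sin Θ * sinh r₂ =
      -(sin Θ * sinh r₂ * (cosh (dist2 Θ r₁ r₂) - 1)) by ring]
    exact div_neg_of_neg_of_pos (neg_neg_of_pos (mul_pos hK (by linarith))) hsinh
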